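/- For n ≥ 2 and subspaces A, B, C₁, ..., Cₙ of a finite-dimensional vector space V, (n-1)·I(A;B) + dim(C₁+⋯+Cₙ) ≤ Σ_{i=1}^{n} I(A+C_i; B+C_i), where I(X;Y) = dim X + dim Y - dim(X+Y). -/

import Mathlib

/-!
Since `I(X;Y) = dim (X ⊓ Y)`, it suffices to put `W = A ⊓ B ≤ (A + Cᵢ) ⊓ (B + Cᵢ)` and
prove `(n - 1) dim W + dim (W + C₁ + ⋯ + Cₙ) ≤ Σᵢ dim (W + Cᵢ)`. This follows by induction
on `n` from submodularity of `dim` applied to `W + Cᵢ` and `W + Σ_{j ≠ i} Cⱼ`, whose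
intersection contains `W`.
-/

open Module

noncomputable def condH {F V : Type*} [Field F] [AddCommGroup V] [Module F V]
    (X Y : Submodule F V) : ℤ :=
  (finrank F ↑(X ⊔ Y) : ℤ) - finrank F ↑Y

noncomputable def mutI {F V : Type*} [Field F] [AddCommGroup V] [Module F V]
    (X Y : Submodule F V) : ℤ :=
  (finrank F ↑X : ℤ) + finrank F ↑Y - finrank F ↑(X ⊔ Y)

noncomputable def condI {F V : Type*} [Field F] [AddCommGroup V] [Module F V]
    (X Y T : Submodule F V) : ℤ :=
  (finrank F ↑(X ⊔ T) : ℤ) + finrank F ↑(Y ⊔ T) - finrank F ↑(X ⊔ Y ⊔ T) - finrank F ↑T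

section

variable {F V : Type*} [Field F] [AddCommGroup V] [Module F V] [FiniteDimensional F V]

lemma mutI_eq_finrank_inf (X Y : Submodule F V) : mutI X Y = finrank F ↑(X ⊓ Y) := by
  have := Submodule.finrank_sup_add_finrank_inf_eq X Y
  unfold mutI
  omega

lemma finrank_sup_le_mutI_sup (A B C : Submodule F V) :
    (finrank F ↑(A ⊓ B ⊔ C) : ℤ) ≤ mutI (A ⊔ C) (B ⊔ C) := by
  rw [mutI_eq_finrank_inf]
  exact_mod_cast Submodule.finrank_mono
    (le_inf (sup_le_sup_right inf_le_left _) (sup_le_sup_right inf_le_right _))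

lemma finrank_sup_sup_add_finrank_le (W X Y : Submodule F V) :
    (finrank F ↑(W ⊔ (X ⊔ Y)) : ℤ) + finrank F W ≤
      finrank F ↑(W ⊔ X) + finrank F ↑(W ⊔ Y) := by
  have modular := Submodule.finrank_sup_add_finrank_inf_eq (W ⊔ X) (W ⊔ Y)
  have hW : finrank F W ≤ finrank F ↑((W ⊔ X) ⊓ (W ⊔ Y)) :=
    Submodule.finrank_mono (le_inf le_sup_left le_sup_left)
  rw [sup_sup_sup_comm, sup_idem] at modular
  omega

lemma card_sub_one_mul_finrank_add_finrank_sup_le_sum (W : Submodule F V)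
    (C : ℕ → Submodule F V) (s : Finset ℕ) :
    ((s.card : ℤ) - 1) * finrank F W + finrank F ↑(W ⊔ s.sup C) ≤
      ∑ i ∈ s, (finrank F ↑(W ⊔ C i) : ℤ) := by
  induction s using Finset.cons_induction with
  | empty => rw [Finset.sup_empty, sup_bot_eq]; simp
  | cons a s ha ih =>
    rw [Finset.sum_cons, Finset.card_cons, Finset.sup_cons]
    have := finrank_sup_sup_add_finrank_le W (C a) (s.sup C)
    push_cast
    linarith

end

theorem stmt14_general {F V : Type*} [Field F] [AddCommGroup V] [Module F V] [FiniteDimensional F V]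
    (n : ℕ) (A B : Submodule F V) (C : ℕ → Submodule F V) :
    ((n : ℤ) - 1) * mutI A B + (finrank F ↑((Finset.Icc 1 n).sup C) : ℤ) ≤
      ∑ i ∈ Finset.Icc 1 n, mutI (A ⊔ C i) (B ⊔ C i) := by
  set s := Finset.Icc 1 n
  have key := card_sub_one_mul_finrank_add_finrank_sup_le_sum (A ⊓ B) C s
  have hC : (finrank F ↑(s.sup C) : ℤ) ≤ finrank F ↑(A ⊓ B ⊔ s.sup C) :=
    mod_cast Submodule.finrank_mono le_sup_right
  have hsum := Finset.sum_le_sum fun i (_ : i ∈ s) => finrank_sup_le_mutI_sup A B (C i)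
  rw [Nat.card_Icc, Nat.add_sub_cancel] at key
  rw [mutI_eq_finrank_inf]
  linarith

theorem stmt14 {F V : Type*} [Field F] [AddCommGroup V] [Module F V] [FiniteDimensional F V]
    (n : ℕ) (hn : 2 ≤ n) (A B : Submodule F V) (C : ℕ → Submodule F V) :
    ((n : ℤ) - 1) * mutI A B + (finrank F ↑((Finset.Icc 1 n).sup C) : ℤ) ≤
      ∑ i ∈ Finset.Icc 1 n, mutI (A ⊔ C i) (B ⊔ C i) :=
  stmt14_general n A B C
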